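/- Fix h(z), b(z) ∈ ℂ((z)) with h′(z) ≠ 0 and c ∈ ℂ. Setting L := −(h/h′)∂ + b (a first-order operator on ℂ((z))), define ρ(L_{−1}) = h^{−1}, ρ(L_0) = L, and ρ(L_1) = h·(L² − L − c(c+1)). Then [ρ(L_0),ρ(L_{−1})] = ρ(L_{−1}), [ρ(L_0),ρ(L_1)] = −ρ(L_1), and [ρ(L_1),ρ(L_{−1})] = 2ρ(L_0); i.e. ρ is a representation of sl(2) with ord ρ(L_{−1}) = 0 and ord ρ(L_1) = 2. -/

import Mathlib

set_option synthInstance.maxHeartbeats 1000000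
set_option maxHeartbeats 1000000

noncomputable section

/-- The derivative `∂ = d/dz` on `ℂ((z))`, as a `ℂ`-linear endomorphism. -/
def Dz : Module.End ℂ (LaurentSeries ℂ) := LaurentSeries.derivative ℂ

/-- Multiplication by a Laurent series `g`, as a `ℂ`-linear endomorphism of `ℂ((z))`. -/
def mz (g : LaurentSeries ℂ) : Module.End ℂ (LaurentSeries ℂ) where
  toFun f := g * f
  map_add' := mul_add g
  map_smul' c f := by
    show g * (c • f) = c • (g * f)
    rw [← HahnSeries.single_zero_mul_eq_smul, ← HahnSeries.single_zero_mul_eq_smul, mul_left_comm]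

/-- `P` is a differential operator on `ℂ((z))` of order `≤ k`: `P = Σ_{j=0}^{k} ξ_j ∂^j`. -/
def DiffOrderLE (P : Module.End ℂ (LaurentSeries ℂ)) (k : ℕ) : Prop :=
  ∃ ξ : ℕ → LaurentSeries ℂ, P = ∑ j ∈ Finset.range (k + 1), mz (ξ j) * Dz ^ j

/-- `P` is a differential operator on `ℂ((z))` of order `< k` (for `k = 0` this means `P = 0`). -/
def DiffOrderLT (P : Module.End ℂ (LaurentSeries ℂ)) (k : ℕ) : Prop :=
  ∃ ξ : ℕ → LaurentSeries ℂ, P = ∑ j ∈ Finset.range k, mz (ξ j) * Dz ^ j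

/-- `P` is a differential operator on `ℂ((z))` of order exactly `k`. -/
def HasOrder (P : Module.End ℂ (LaurentSeries ℂ)) (k : ℕ) : Prop :=
  DiffOrderLE P k ∧ ¬ DiffOrderLT P k

/-!
With `a := -h / h'`, the first-order operator `L = a∂ + b` satisfies `⁅L, u⁆ = a u'` for every
multiplication operator `u`; in particular `⁅L, h⁻¹⁆ = h⁻¹` and `⁅L, h⁆ = -h`. The relations then
hold in any associative algebra: `Q := L² - L - k` commutes with `L`, and `⁅L, h⁻¹⁆ = h⁻¹` says
that conjugation by `h⁻¹` shifts `L` to `L + 1`, so `⁅h Q, h⁻¹⁆ = Q(L + 1) - Q(L) = 2L`.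
The order of `ρ(L₁)` is read off from its leading coefficient `h a² ≠ 0`.
-/

section CommutatorRelations

variable {R A : Type*} [CommRing R] [Ring A] [Algebra R A] {L x y : A}

theorem lie_eq_neg_of_lie_inv (hxy : x * y = 1) (hyx : y * x = 1) (hy : ⁅L, y⁆ = y) :
    ⁅L, x⁆ = -x := by
  have h := congrArg (fun t => x * t * x) hy
  simp only [Ring.lie_def, mul_sub, sub_mul, mul_assoc, hyx, mul_one] at h
  rw [← mul_assoc, hxy, one_mul] at h
  rw [Ring.lie_def, ← neg_sub, h]

theorem lie_mul_of_commute {Q : A} (hx : ⁅L, x⁆ = -x) (hQ : Commute L Q) :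
    ⁅L, x * Q⁆ = -(x * Q) := by
  rw [Ring.lie_def] at hx ⊢
  calc L * (x * Q) - x * Q * L = (L * x - x * L) * Q + x * (L * Q - Q * L) := by noncomm_ring
    _ = -(x * Q) := by rw [hx, hQ.eq, sub_self, mul_zero, add_zero, neg_mul]

theorem commute_sq_sub_self_sub_smul_one (L : A) (k : R) : Commute L (L ^ 2 - L - k • 1) :=
  ((Commute.self_pow L 2).sub_right (Commute.refl L)).sub_right ((Commute.one_right L).smul_right k)

theorem lie_mul_sq_sub_self_sub_smul_one (k : R) (hxy : x * y = 1) (hyx : y * x = 1)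
    (hy : ⁅L, y⁆ = y) : ⁅x * (L ^ 2 - L - k • 1), y⁆ = (2 : R) • L := by
  have hLy : L * y = y * (L + 1) := by
    rw [Ring.lie_def, sub_eq_iff_eq_add] at hy
    rw [hy, mul_add, mul_one, add_comm]
  have hQy : (L ^ 2 - L - k • 1) * y = y * ((L + 1) ^ 2 - (L + 1) - k • 1) := by
    simp only [sq, sub_mul, mul_sub, mul_assoc, hLy, ← mul_assoc L y, smul_mul_assoc,
      mul_smul_comm, one_mul, mul_one]
  rw [Ring.lie_def, mul_assoc, hQy, ← mul_assoc, ← mul_assoc, hxy, hyx, one_mul, one_mul, two_smul]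
  noncomm_ring

end CommutatorRelations

open HahnSeries

lemma coeff_Dz (f : LaurentSeries ℂ) (n : ℤ) :
    (Dz f).coeff n = ((n + 1 : ℤ) : ℂ) * f.coeff (n + 1) := by
  simp [Dz, LaurentSeries.derivative_apply, LaurentSeries.hasseDeriv_coeff, zsmul_eq_mul]

lemma coeff_single_one_mul_Dz (f : LaurentSeries ℂ) (n : ℤ) :
    (single 1 1 * Dz f).coeff n = n * f.coeff n := by
  rw [show n = n - 1 + 1 by ring, coeff_single_mul_add, one_mul, coeff_Dz]

lemma support_single_one_mul_Dz_subset (f : LaurentSeries ℂ) :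
    (single 1 1 * Dz f).support ⊆ f.support := fun n hn => by
  rw [mem_support, coeff_single_one_mul_Dz] at hn
  exact right_ne_zero_of_mul hn

/-- The Euler operator `z∂` multiplies the `n`-th coefficient by `n`, so its Leibniz rule is the
identity `n = i + j` on the antidiagonal of the product. -/
lemma single_one_mul_Dz_mul (f g : LaurentSeries ℂ) :
    single 1 1 * Dz (f * g) = single 1 1 * Dz f * g + f * (single 1 1 * Dz g) := by
  ext n
  rw [coeff_add, coeff_single_one_mul_Dz, coeff_mul,
    coeff_mul_left' f.isPWO_support (support_single_one_mul_Dz_subset f),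
    coeff_mul_right' g.isPWO_support (support_single_one_mul_Dz_subset g), Finset.mul_sum,
    ← Finset.sum_add_distrib]
  refine Finset.sum_congr rfl fun ij hij => ?_
  rw [coeff_single_one_mul_Dz, coeff_single_one_mul_Dz, ← (Finset.mem_antidiagonal.mp hij).2.2]
  push_cast
  ring

lemma Dz_mul (f g : LaurentSeries ℂ) : Dz (f * g) = Dz f * g + f * Dz g :=
  mul_left_cancel₀ (single_ne_zero one_ne_zero) <| by
    rw [single_one_mul_Dz_mul]
    ring

lemma Dz_one : Dz 1 = 0 := by simpa using Dz_mul 1 1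

lemma Dz_single_one_one : Dz (single 1 1) = 1 := by
  ext n
  rw [coeff_Dz]
  rcases eq_or_ne n 0 with rfl | hn <;> simp [*]

lemma Dz_inv (f : LaurentSeries ℂ) : Dz f⁻¹ = -(Dz f / f ^ 2) := by
  rcases eq_or_ne f 0 with rfl | hf
  · simp
  have h := Dz_mul f f⁻¹
  rw [mul_inv_cancel₀ hf, Dz_one] at h
  calc Dz f⁻¹ = f⁻¹ * (f * Dz f⁻¹) := by rw [← mul_assoc, inv_mul_cancel₀ hf, one_mul]
    _ = -(Dz f / f ^ 2) := by
      rw [show f * Dz f⁻¹ = -(Dz f * f⁻¹) by linear_combination -h]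
      ring

@[simp]
lemma mz_apply (g f : LaurentSeries ℂ) : mz g f = g * f := rfl

lemma mz_mul (f g : LaurentSeries ℂ) : mz (f * g) = mz f * mz g :=
  LinearMap.ext fun u => mul_assoc f g u

lemma mz_one : mz 1 = 1 :=
  LinearMap.ext fun u => one_mul u

lemma lie_mz_mul_Dz_add_mz (a b u : LaurentSeries ℂ) :
    ⁅mz a * Dz + mz b, mz u⁆ = mz (a * Dz u) := by
  refine LinearMap.ext fun f => ?_
  simp only [Ring.lie_def, LinearMap.sub_apply, LinearMap.add_apply, Module.End.mul_apply,
    mz_apply, Dz_mul]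
  ring

lemma mz_mul_sq_sub_self_sub_smul_one (g a b : LaurentSeries ℂ) (k : ℂ) :
    mz g * ((mz a * Dz + mz b) ^ 2 - (mz a * Dz + mz b) - k • 1) =
      mz (g * (a * Dz b + b * b - b - C k)) + mz (g * (a * Dz a + 2 * a * b - a)) * Dz
        + mz (g * (a * a)) * Dz ^ 2 := by
  refine LinearMap.ext fun f => ?_
  simp only [LinearMap.add_apply, LinearMap.sub_apply, LinearMap.smul_apply, Module.End.mul_apply,
    Module.End.one_apply, mz_apply, sq, map_add, Dz_mul, ← C_mul_eq_smul]
  ring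

lemma hasOrder_mz_zero {g : LaurentSeries ℂ} (hg : g ≠ 0) : HasOrder (mz g) 0 := by
  refine ⟨⟨fun _ => g, by simp⟩, fun ⟨ξ, hξ⟩ => hg ?_⟩
  simpa using LinearMap.congr_fun hξ 1

lemma hasOrder_two {p q r : LaurentSeries ℂ} (hr : r ≠ 0) :
    HasOrder (mz p + mz q * Dz + mz r * Dz ^ 2) 2 := by
  refine ⟨⟨fun j => [p, q, r].getD j 0, by simp [Finset.sum_range_succ]⟩, fun ⟨ξ, hξ⟩ => hr ?_⟩
  simp only [Finset.sum_range_succ, Finset.sum_range_zero, zero_add, pow_zero, pow_one,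
    mul_one] at hξ
  -- evaluating on `1`, `z`, `z²` isolates the coefficient of `∂²`
  have E1 := LinearMap.congr_fun hξ 1
  have E2 := LinearMap.congr_fun hξ (single 1 1)
  have E3 := LinearMap.congr_fun hξ (single 1 1 * single 1 1)
  simp only [LinearMap.add_apply, Module.End.mul_apply, mz_apply, sq, Dz_mul, Dz_one,
    Dz_single_one_one, map_add, map_zero, one_mul, mul_one, add_zero] at E1 E2 E3
  have h2r : C (2 : ℂ) * r = 0 := by
    rw [map_ofNat]
    linear_combination E3 - 2 * single 1 1 * E2 + single 1 1 * single 1 1 * E1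
  rw [C_mul_eq_smul, smul_eq_zero] at h2r
  exact h2r.resolve_left two_ne_zero

/-- Fix `h, b ∈ ℂ((z))` with `h′ ≠ 0` and `c ∈ ℂ`.  Setting `L := −(h/h′)∂ + b`, the operators
`ρ(L₋₁) = h⁻¹`, `ρ(L₀) = L`, `ρ(L₁) = h·(L² − L − c(c+1))` define a representation of `sl(2)`:
`[ρL₀, ρL₋₁] = ρL₋₁`, `[ρL₀, ρL₁] = −ρL₁`, `[ρL₁, ρL₋₁] = 2ρL₀`; moreover
`ord ρ(L₋₁) = 0` and `ord ρ(L₁) = 2`. -/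
theorem sl2_representation_S0
    (h b : LaurentSeries ℂ) (c : ℂ) (hder : Dz h ≠ 0)
    (L ρm1 ρ0 ρ1 : Module.End ℂ (LaurentSeries ℂ))
    (hL : L = mz (-(h / Dz h)) * Dz + mz b)
    (hm1 : ρm1 = mz h⁻¹)
    (h0 : ρ0 = L)
    (h1 : ρ1 = mz h * (L ^ 2 - L - (c * (c + 1)) • 1)) :
    ⁅ρ0, ρm1⁆ = ρm1 ∧ ⁅ρ0, ρ1⁆ = -ρ1 ∧ ⁅ρ1, ρm1⁆ = (2 : ℂ) • ρ0 ∧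
      HasOrder ρm1 0 ∧ HasOrder ρ1 2 := by
  have hh : h ≠ 0 := by
    rintro rfl
    exact hder (map_zero Dz)
  have hLinv : ⁅L, mz h⁻¹⁆ = mz h⁻¹ := by
    rw [hL, lie_mz_mul_Dz_add_mz, Dz_inv]
    congr 1
    field_simp
  have hmul_inv : mz h * mz h⁻¹ = 1 := by rw [← mz_mul, mul_inv_cancel₀ hh, mz_one]
  have hinv_mul : mz h⁻¹ * mz h = 1 := by rw [← mz_mul, inv_mul_cancel₀ hh, mz_one]
  subst ρm1 ρ0 ρ1
  refine ⟨hLinv, lie_mul_of_commute (lie_eq_neg_of_lie_inv hmul_inv hinv_mul hLinv)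
    (commute_sq_sub_self_sub_smul_one L _),
    lie_mul_sq_sub_self_sub_smul_one _ hmul_inv hinv_mul hLinv, hasOrder_mz_zero (inv_ne_zero hh), ?_⟩
  rw [hL, mz_mul_sq_sub_self_sub_smul_one]
  exact hasOrder_two (by simp [hh, hder])
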